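/- arXiv:2507.01624 — 5 statements merged into one kernel-verified Lean document; each statement's English description precedes it below -/
import Mathlib

section
/- Let N ≥ 2 be an integer and define G̃(u) = |sin(Nπu)/(N·sin(πu))| for u ∈ (−1/N, 1/N) \ {0}, G̃(0) = 1, and G̃(1/N) := 0 by continuity. Then G̃ is strictly decreasing on [0, 1/N). -/
open Real

lemma dirich_sum (N : ℕ) (x : ℝ) :
    ∑ k ∈ Finset.range N, (2 * Real.sin x * Real.cos (((N:ℝ) - 1 - 2*k) * x))
      = 2 * Real.sin ((N:ℝ) * x) := by
  have h : ∀ k ∈ Finset.range N,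
      2 * Real.sin x * Real.cos (((N:ℝ) - 1 - 2*k) * x)
        = (fun k : ℕ => Real.sin (((N:ℝ) - 2*k) * x)) k
          - (fun k : ℕ => Real.sin (((N:ℝ) - 2*k) * x)) (k+1) := by
    intro k _
    simp only
    rw [Real.sin_sub_sin]
    push_cast
    ring_nf
  rw [Finset.sum_congr rfl h,
    Finset.sum_range_sub' (fun k : ℕ => Real.sin (((N:ℝ) - 2*k) * x))]
  have : ((N:ℝ) - 2*(N:ℕ)) * x = -((N:ℝ)*x) := by push_cast; ring
  rw [this, Real.sin_neg]
  simp
  ring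

lemma val_eq (N : ℕ) (hN : 2 ≤ N) (u : ℝ) (hu : u ∈ Set.Ico 0 (1 / (N:ℝ))) :
    (if u = 0 then (1:ℝ) else
        |Real.sin ((N : ℝ) * π * u) / ((N : ℝ) * Real.sin (π * u))|)
      = (∑ k ∈ Finset.range N, Real.cos (((N:ℝ) - 1 - 2*k) * (π * u))) / N := by
  have hNpos : (0:ℝ) < N := by positivity
  obtain ⟨hu0, hu1⟩ := hu
  rcases eq_or_lt_of_le hu0 with h0 | h0
  · rw [← h0]
    simp [div_self hNpos.ne']
  · rw [if_neg (ne_of_gt h0)]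
    have hπu : 0 < π * u := by positivity
    have hπu2 : π * u < π := by
      have h1 : π * u < π * (1/N) := mul_lt_mul_of_pos_left hu1 Real.pi_pos
      have h2 : π * (1/(N:ℝ)) ≤ π := by
        rw [mul_one_div]
        exact div_le_self Real.pi_pos.le (by exact_mod_cast Nat.one_le_of_lt hN)
      linarith
    have hs : 0 < Real.sin (π * u) := Real.sin_pos_of_pos_of_lt_pi hπu hπu2
    have hNs : 0 < Real.sin ((N:ℝ) * (π * u)) := by
      apply Real.sin_pos_of_pos_of_lt_pi (by positivity)
      calc (N:ℝ) * (π * u) < (N:ℝ) * (π * (1/N)) := by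
            exact mul_lt_mul_of_pos_left (mul_lt_mul_of_pos_left hu1 Real.pi_pos) hNpos
        _ = π := by field_simp
    have key := dirich_sum N (π * u)
    have hsum : ∑ k ∈ Finset.range N, Real.cos (((N:ℝ) - 1 - 2*k) * (π * u))
        = Real.sin ((N:ℝ) * (π * u)) / Real.sin (π * u) := by
      rw [eq_div_iff (ne_of_gt hs)]
      rw [← Finset.mul_sum] at key
      nlinarith [key]
    rw [mul_assoc, hsum, abs_of_pos (by positivity)]
    rw [div_div, mul_comm (Real.sin (π * u)) (N:ℝ)]

/-- The normalized Dirichlet kernel (extended by `1` at `0`) is strictly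
decreasing on the main lobe `[0, 1/N)`. -/
theorem stmt_3 (N : ℕ) (hN : 2 ≤ N) :
    StrictAntiOn (fun u : ℝ => if u = 0 then 1 else
        |Real.sin ((N : ℝ) * π * u) / ((N : ℝ) * Real.sin (π * u))|)
      (Set.Ico 0 (1 / (N : ℝ))) := by
  intro u1 h1 u2 h2 h12
  simp only
  rw [val_eq N hN u1 h1, val_eq N hN u2 h2]
  have hNpos : (0:ℝ) < N := by positivity
  have hN1 : (1:ℝ) ≤ (N:ℝ) - 1 := by
    have : (2:ℝ) ≤ N := by exact_mod_cast hN
    linarith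
  obtain ⟨h10, h11⟩ := h1
  obtain ⟨h20, h21⟩ := h2
  apply div_lt_div_of_pos_right _ hNpos
  · apply Finset.sum_lt_sum
    · intro k hk
      have hk' : (k:ℝ) ≤ (N:ℝ) - 1 := by
        have := Finset.mem_range.mp hk
        have : (k:ℝ) + 1 ≤ N := by exact_mod_cast this
        linarith
      set c : ℝ := (N:ℝ) - 1 - 2*k with hc
      have hcabs : |c| ≤ (N:ℝ) - 1 := by
        rw [abs_le]; constructor <;> [skip; skip] <;> simp only [hc] <;> push_cast <;> nlinarith [Nat.cast_nonneg (α := ℝ) k]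
      rw [← Real.cos_abs (c * (π*u2)), ← Real.cos_abs (c * (π*u1)),
        abs_mul c (π*u2), abs_mul c (π*u1),
        abs_of_nonneg (by positivity : (0:ℝ) ≤ π * u1),
        abs_of_nonneg (by positivity : (0:ℝ) ≤ π * u2)]
      apply Real.cos_le_cos_of_nonneg_of_le_pi
      · positivity
      · have h1 : |c| * (π * u2) ≤ ((N:ℝ)-1) * (π * u2) := by
          apply mul_le_mul_of_nonneg_right hcabs (by positivity)
        have h2 : ((N:ℝ)-1) * (π * u2) ≤ ((N:ℝ)-1) * (π * (1/N)) := by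
          apply mul_le_mul_of_nonneg_left _ (by linarith)
          exact le_of_lt (mul_lt_mul_of_pos_left h21 Real.pi_pos)
        have h3 : ((N:ℝ)-1) * (π * (1/N)) ≤ π := by
          have hd : π / N * N = π := div_mul_cancel₀ _ hNpos.ne'
          rw [mul_one_div]
          nlinarith [div_nonneg Real.pi_pos.le hNpos.le]
        linarith
      · exact mul_le_mul_of_nonneg_left (mul_le_mul_of_nonneg_left h12.le Real.pi_pos.le) (abs_nonneg c)
    · refine ⟨0, Finset.mem_range.mpr (by omega), ?_⟩
      push_cast
      simp only [mul_zero, sub_zero]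
      have hb2 : ((N:ℝ)-1) * (π * u2) ≤ π := by
        have h2 : ((N:ℝ)-1) * (π * u2) ≤ ((N:ℝ)-1) * (π * (1/N)) := by
          apply mul_le_mul_of_nonneg_left _ (by linarith)
          exact le_of_lt (mul_lt_mul_of_pos_left h21 Real.pi_pos)
        have h3 : ((N:ℝ)-1) * (π * (1/N)) ≤ π := by
          have hd : π / N * N = π := div_mul_cancel₀ _ hNpos.ne'
          rw [mul_one_div]
          nlinarith [div_nonneg Real.pi_pos.le hNpos.le]
        linarith
      have hb1 : ((N:ℝ)-1) * (π * u1) ≤ π := by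
        have : ((N:ℝ)-1) * (π * u1) ≤ ((N:ℝ)-1) * (π * u2) := by
          apply mul_le_mul_of_nonneg_left _ (by linarith)
          exact mul_le_mul_of_nonneg_left h12.le Real.pi_pos.le
        linarith
      apply Real.strictAntiOn_cos
      · exact ⟨by positivity, hb1⟩
      · exact ⟨by positivity, hb2⟩
      · apply mul_lt_mul_of_pos_left _ (by linarith)
        exact mul_lt_mul_of_pos_left h12 Real.pi_pos
end

section
/- Consider the secrecy-guaranteed problem: minimize f_c subject to f_0 ≤ f_c ≤ f_H, 0 ≤ Δ_f ≤ Δ_{f,max}, and the null-steering condition (f_c/f_0)·Δ_θ = 2k/N + 2Δ_r·Δ_f/c for some integer k with k mod N ≠ 0. Suppose Δ_θ = 0 and Δ_r ≠ 0. Then the problem is feasible if and only if Δ_{f,max} ≥ c/(N·|Δ_r|), and when feasible, an optimal solution is Δ_f* = c/(N·|Δ_r|) and f_c* = f_0. -/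
/-- Feasibility for the secrecy-guaranteed problem (P4): carrier-frequency and
frequency-offset constraints plus the null-steering condition. -/
def Feasible (N : ℕ) (f0 fH c Δfmax Δθ Δr fc Δf : ℝ) : Prop :=
  f0 ≤ fc ∧ fc ≤ fH ∧ 0 ≤ Δf ∧ Δf ≤ Δfmax ∧
    ∃ k : ℤ, k % (N : ℤ) ≠ 0 ∧ (fc / f0) * Δθ = 2 * (k : ℝ) / (N : ℝ) + 2 * Δr * Δf / c

/-- Proposition 1: case `Δθ = 0`, `Δr ≠ 0`.  (P4) is feasible iff
`Δf_max ≥ c/(N|Δr|)`, and then `Δf* = c/(N|Δr|)`, `fc* = f0` is optimal. -/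
theorem stmt_4 (N : ℕ) (hN : 2 ≤ N) (f0 fH c Δfmax Δθ Δr : ℝ)
    (hf0 : 0 < f0) (hfH : f0 ≤ fH) (hc : 0 < c) (hmax : 0 < Δfmax)
    (hθ : Δθ = 0) (hr : Δr ≠ 0) :
    ((∃ fc Δf, Feasible N f0 fH c Δfmax Δθ Δr fc Δf) ↔ c / ((N : ℝ) * |Δr|) ≤ Δfmax) ∧
    (c / ((N : ℝ) * |Δr|) ≤ Δfmax →
      Feasible N f0 fH c Δfmax Δθ Δr f0 (c / ((N : ℝ) * |Δr|)) ∧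
      ∀ fc Δf, Feasible N f0 fH c Δfmax Δθ Δr fc Δf → f0 ≤ fc) := by
  have hNR : (0:ℝ) < (N : ℝ) := by positivity
  have hrabs : (0:ℝ) < |Δr| := abs_pos.mpr hr
  have hA : (0:ℝ) < (N : ℝ) * |Δr| := by positivity
  have hNZ : (N : ℤ) ≠ 0 := by positivity
  -- the key backward construction
  have hback : c / ((N : ℝ) * |Δr|) ≤ Δfmax →
      Feasible N f0 fH c Δfmax Δθ Δr f0 (c / ((N : ℝ) * |Δr|)) := by
    intro hle
    refine ⟨le_refl _, hfH, by positivity, hle, ?_⟩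
    refine ⟨if 0 < Δr then -1 else 1, ?_, ?_⟩
    · intro h
      have hdvd : (N : ℤ) ∣ (if 0 < Δr then (-1:ℤ) else 1) :=
        Int.dvd_of_emod_eq_zero h
      have hdvd1 : (N : ℤ) ∣ 1 := by
        by_cases hpos : 0 < Δr
        · rw [if_pos hpos] at hdvd
          exact (Int.dvd_neg).mp hdvd
        · rwa [if_neg hpos] at hdvd
      have := Int.le_of_dvd one_pos hdvd1
      omega
    · rcases lt_or_gt_of_ne hr with hneg | hpos
      · have habs : |Δr| = -Δr := abs_of_neg hneg
        simp only [if_neg (not_lt.mpr hneg.le), hθ, habs]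
        field_simp
        ring
      · have habs : |Δr| = Δr := abs_of_pos hpos
        simp only [if_pos hpos, hθ, habs]
        field_simp
        ring
  constructor
  · constructor
    · rintro ⟨fc, Δf, hbf, hfc, hΔf0, hΔfm, k, hk, heq⟩
      rw [hθ, mul_zero] at heq
      have hk0 : k ≠ 0 := by
        intro h; apply hk; simp [h]
      have hk1 : (1:ℝ) ≤ |(k:ℝ)| := by
        rw [← Int.cast_abs]
        exact_mod_cast Int.one_le_abs hk0
      -- Δf = -k c/(N Δr)
      have hΔf : Δf = -(k:ℝ) * c / ((N:ℝ) * Δr) := by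
        have h2 : (2:ℝ) * Δr * Δf / c = -(2 * (k:ℝ) / (N:ℝ)) := by linarith
        field_simp at h2 ⊢
        nlinarith [h2]
      have habsΔf : |Δf| = |(k:ℝ)| * c / ((N:ℝ) * |Δr|) := by
        rw [hΔf, abs_div, abs_mul, abs_mul, abs_neg, abs_of_pos hc,
          abs_of_pos hNR]
      have : c / ((N : ℝ) * |Δr|) ≤ Δf := by
        rw [← abs_of_nonneg hΔf0, habsΔf]
        rw [div_le_div_iff₀ hA hA]
        nlinarith [mul_le_mul_of_nonneg_right hk1 (mul_pos hc hA).le]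
      linarith
    · intro hle
      exact ⟨f0, _, hback hle⟩
  · intro hle
    refine ⟨hback hle, ?_⟩
    rintro fc Δf ⟨h1, _⟩
    exact h1
end

section
/- Let P_B > 0, P_E > 0, σ² > 0. Define R_MA = [log₂((P_B + σ²)/(P_E + σ²))]⁺ and R_FSA = log₂(1 + P_B/σ²), where [x]⁺ = max{x, 0}. Then R_FSA − R_MA = min{log₂(1 + P_E/σ²), log₂(1 + P_B/σ²)} > 0. -/
open Real

/-- Corollary 1: secrecy-rate gain of the FSA over MAs/FPAs when Bob and Eve
are at the same angle. -/
theorem stmt_5 (PB PE σ2 : ℝ) (hB : 0 < PB) (hE : 0 < PE) (hσ : 0 < σ2) :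
    Real.logb 2 (1 + PB / σ2) - max (Real.logb 2 ((PB + σ2) / (PE + σ2))) 0 =
      min (Real.logb 2 (1 + PE / σ2)) (Real.logb 2 (1 + PB / σ2)) ∧
    0 < min (Real.logb 2 (1 + PE / σ2)) (Real.logb 2 (1 + PB / σ2)) := by
  have hBσ : (0:ℝ) < PB + σ2 := by linarith
  have hEσ : (0:ℝ) < PE + σ2 := by linarith
  have hB1 : (1:ℝ) + PB / σ2 = (PB + σ2) / σ2 := by field_simp; ring
  have hE1 : (1:ℝ) + PE / σ2 = (PE + σ2) / σ2 := by field_simp; ring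
  have hlb : ∀ x y : ℝ, x ≠ 0 → y ≠ 0 →
      Real.logb 2 (x / y) = Real.logb 2 x - Real.logb 2 y :=
    fun x y hx hy => Real.logb_div hx hy
  rw [hB1, hE1, hlb _ _ hBσ.ne' hσ.ne', hlb _ _ hEσ.ne' hσ.ne',
      hlb _ _ hBσ.ne' hEσ.ne']
  constructor
  · rcases le_total PE PB with h | h
    · have hmono : Real.logb 2 (PE + σ2) ≤ Real.logb 2 (PB + σ2) :=
        Real.logb_le_logb_of_le one_lt_two hEσ (by linarith)
      rw [max_eq_left (by linarith), min_eq_left (by linarith)]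
      ring
    · have hmono : Real.logb 2 (PB + σ2) ≤ Real.logb 2 (PE + σ2) :=
        Real.logb_le_logb_of_le one_lt_two hBσ (by linarith)
      rw [max_eq_right (by linarith), min_eq_right (by linarith)]
      ring
  · have hE2 : Real.logb 2 σ2 < Real.logb 2 (PE + σ2) :=
      Real.logb_lt_logb one_lt_two hσ (by linarith)
    have hB2 : Real.logb 2 σ2 < Real.logb 2 (PB + σ2) :=
      Real.logb_lt_logb one_lt_two hσ (by linarith)
    exact lt_min (by linarith) (by linarith)
end

section
/- Consider the secrecy-guaranteed problem: minimize f_c subject to f_0 ≤ f_c ≤ f_H, 0 ≤ Δ_f ≤ Δ_{f,max}, and (f_c/f_0)·Δ_θ = 2k/N + 2Δ_r·Δ_f/c for some integer k with k mod N ≠ 0. Suppose Δ_r = 0 and Δ_θ ≠ 0. Then the problem is feasible if and only if f_H ≥ 2f_0/(N·|Δ_θ|), and when feasible, an optimal solution is Δ_f* = 0 and f_c* = 2f_0/(N·|Δ_θ|). -/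
/-- Proposition 2: case `Δr = 0`, `Δθ ≠ 0`.  (P4) is feasible iff
`f_H ≥ 2 f_0 /(N |Δθ|)`, and then `Δf* = 0`, `fc* = 2 f_0 /(N |Δθ|)` is optimal. -/
theorem stmt_6 (N : ℕ) (hN : 2 ≤ N) (f0 fH c Δfmax Δθ Δr : ℝ)
    (hf0 : 0 < f0) (hfH : f0 ≤ fH) (hc : 0 < c) (hmax : 0 ≤ Δfmax)
    (hr : Δr = 0) (hθ : Δθ ≠ 0) (hθ2 : |Δθ| < 2 / (N : ℝ)) :
    ((∃ fc Δf, Feasible N f0 fH c Δfmax Δθ Δr fc Δf) ↔ 2 * f0 / ((N : ℝ) * |Δθ|) ≤ fH) ∧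
    (2 * f0 / ((N : ℝ) * |Δθ|) ≤ fH →
      Feasible N f0 fH c Δfmax Δθ Δr (2 * f0 / ((N : ℝ) * |Δθ|)) 0 ∧
      ∀ fc Δf, Feasible N f0 fH c Δfmax Δθ Δr fc Δf → 2 * f0 / ((N : ℝ) * |Δθ|) ≤ fc) := by
  have hNR : (0:ℝ) < (N:ℝ) := by positivity
  have habs : 0 < |Δθ| := abs_pos.mpr hθ
  set A := 2 * f0 / ((N : ℝ) * |Δθ|) with hA
  have hNθ : (N:ℝ) * |Δθ| < 2 := by
    have := (lt_div_iff₀ hNR).mp hθ2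
    linarith [this]
  have hAfc : f0 ≤ A := by
    rw [hA, le_div_iff₀ (by positivity)]
    nlinarith
  -- lower bound lemma
  have lower : ∀ fc Δf, Feasible N f0 fH c Δfmax Δθ Δr fc Δf → A ≤ fc := by
    rintro fc Δf ⟨h1, h2, h3, h4, k, hk, heq⟩
    rw [hr] at heq
    simp only [mul_zero, zero_mul, zero_div, add_zero] at heq
    have hk0 : k ≠ 0 := by
      intro h; apply hk; simp [h]
    have hk1 : (1:ℝ) ≤ |(k:ℝ)| := by
      have : (1:ℤ) ≤ |k| := Int.one_le_abs hk0
      calc (1:ℝ) ≤ (|k| : ℤ) := by exact_mod_cast this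
        _ = |(k:ℝ)| := by push_cast; ring
    have hfc0 : 0 < fc := lt_of_lt_of_le hf0 h1
    have habs_eq : fc / f0 * |Δθ| = 2 * |(k:ℝ)| / (N:ℝ) := by
      have := congrArg abs heq
      rwa [abs_mul, abs_div, abs_of_pos hfc0, abs_of_pos hf0,
        abs_div, abs_of_pos hNR, abs_mul, abs_of_nonneg (by norm_num : (0:ℝ) ≤ 2)] at this
    have h2N : 2 / (N:ℝ) ≤ fc / f0 * |Δθ| := by
      rw [habs_eq]
      rw [div_le_div_iff₀ hNR hNR]
      nlinarith
    have h := mul_le_mul_of_nonneg_right h2N (mul_pos hNR hf0).le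
    have e1 : 2 / (N:ℝ) * ((N:ℝ)*f0) = 2*f0 := by field_simp
    have e2 : fc / f0 * |Δθ| * ((N:ℝ)*f0) = fc * ((N:ℝ)*|Δθ|) := by
      field_simp
    rw [e1, e2] at h
    rw [hA, div_le_iff₀ (by positivity)]
    exact h
  have feas : A ≤ fH → Feasible N f0 fH c Δfmax Δθ Δr A 0 := by
    intro hAH
    refine ⟨hAfc, hAH, le_refl 0, hmax, if 0 < Δθ then 1 else -1, ?_, ?_⟩
    · have hN2 : (2:ℤ) ≤ (N:ℤ) := by exact_mod_cast hN
      split_ifs <;> intro h <;>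
        have hd := Int.dvd_of_emod_eq_zero h
      · exact absurd (Int.le_of_dvd one_pos hd) (by omega)
      · exact absurd (Int.le_of_dvd one_pos hd.neg_right) (by omega)
    · rw [hr]
      split_ifs with hpos
      · rw [hA, abs_of_pos hpos]
        field_simp
        ring
      · have hneg : Δθ < 0 := lt_of_le_of_ne (not_lt.mp hpos) hθ
        rw [hA, abs_of_neg hneg]
        field_simp
        ring
  constructor
  · constructor
    · rintro ⟨fc, Δf, hfeas⟩
      exact le_trans (lower fc Δf hfeas) hfeas.2.1
    · intro h; exact ⟨A, 0, feas h⟩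
  · intro h; exact ⟨feas h, lower⟩
end

section
/- Let P_B > 0, σ² > 0, N ≥ 2, 0 < |Δ_θ| < 2/N, and let I ∈ [0, 1]. Then log₂(((P_B·N²Δ_θ²/4 + σ²)·(I·P_B + σ²))/(σ²·(P_B + σ²))) > 0 if and only if I > (1 − N²Δ_θ²/4)·σ² / (N²Δ_θ²/4 · P_B + σ²). -/
open Real

/-- Corollary 3: condition under which the FSA outperforms the FPA in case 2. -/
theorem stmt_8 (PB σ2 Δθ I : ℝ) (N : ℕ) (hN : 2 ≤ N) (hB : 0 < PB) (hσ : 0 < σ2)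
    (h1 : 0 < |Δθ|) (h2 : |Δθ| < 2 / (N : ℝ)) (hI0 : 0 ≤ I) (hI1 : I ≤ 1) :
    0 < Real.logb 2 (((PB * (N : ℝ) ^ 2 * Δθ ^ 2 / 4 + σ2) * (I * PB + σ2)) /
        (σ2 * (PB + σ2))) ↔
      (1 - (N : ℝ) ^ 2 * Δθ ^ 2 / 4) * σ2 / ((N : ℝ) ^ 2 * Δθ ^ 2 / 4 * PB + σ2) < I := by
  have hA : (0:ℝ) ≤ (N : ℝ) ^ 2 * Δθ ^ 2 / 4 := by positivity
  have hnum : 0 < PB * (N : ℝ) ^ 2 * Δθ ^ 2 / 4 + σ2 := by nlinarith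
  have hnum2 : 0 < I * PB + σ2 := by nlinarith
  have hden : 0 < σ2 * (PB + σ2) := by positivity
  have hden2 : 0 < (N : ℝ) ^ 2 * Δθ ^ 2 / 4 * PB + σ2 := by nlinarith
  rw [Real.logb_pos_iff one_lt_two (by positivity), one_lt_div hden,
    div_lt_iff₀ hden2]
  constructor <;> intro h <;> nlinarith
end
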